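/- Let W be a complex vector space with dim W = k ≥ 3, let E be a one-dimensional complex vector space, and set V̄ = W ⊕ E. Let 𝔩 ⊆ sl(V̄) be a Lie subalgebra containing sl(W) (acting trivially on E) and containing an element ξ whose projections to both of the sl(W)-isotypic components W ⊗ E* and E ⊗ W* of End(V̄) are nonzero. Then 𝔩 = sl(V̄). -/

import Mathlib

/-!
Write `ξ` in block form `[[A, b], [c, d]]` with respect to `W × ℂ`. Bracketing `ξ` with
`X ∈ sl(W)` and subtracting `[X, A] ∈ sl(W)` leaves the off-diagonal element
`[[0, X b], [-c X, 0]]` in `𝔩`. For a rank-one nilpotent `X`, chosen using `dim W ≥ 3`, exactly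
one of the two blocks survives and is nonzero. Since `sl(W)` maps a nonzero vector (covector) to
any vector (covector), `𝔩` then contains all off-diagonal elements, and their brackets supply the
diagonal elements `diag(X, d)` with `tr X + d = 0` that `sl(W)` is missing.
-/

open Module LinearMap

attribute [local instance 100] LieRing.ofAssociativeRing

section LinearAlgebra

variable {K V : Type*} [Field K] [AddCommGroup V] [Module K V]

lemma comp_smulRight (c φ : Dual K V) (v : V) : c ∘ₗ φ.smulRight v = c v • φ := by
  ext w
  simp [mul_comm]

variable [FiniteDimensional K V]

lemma exists_ne_zero_apply_eq_zero {U : Type*} [AddCommGroup U] [Module K U]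
    [FiniteDimensional K U] (f : V →ₗ[K] U) (h : finrank K U < finrank K V) :
    ∃ x ≠ 0, f x = 0 := by
  obtain ⟨x, hx, hx0⟩ := (Submodule.ne_bot_iff _).mp (ker_ne_bot_of_finrank_lt h)
  exact ⟨x, hx0, hx⟩

lemma exists_ne_zero_apply_eq_zero_of_one_lt (f : Dual K V) (h : 1 < finrank K V) :
    ∃ x ≠ 0, f x = 0 :=
  exists_ne_zero_apply_eq_zero f (by simpa using h)

lemma exists_ne_zero_apply_eq_zero_apply_eq_zero_of_two_lt (f g : Dual K V)
    (h : 2 < finrank K V) : ∃ x ≠ 0, f x = 0 ∧ g x = 0 := by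
  obtain ⟨x, hx, hfg⟩ := exists_ne_zero_apply_eq_zero (f.prod g) (by simpa using h)
  exact ⟨x, hx, by simpa [Prod.ext_iff] using hfg⟩

lemma exists_trace_eq_zero_apply_eq (hV : 2 ≤ finrank K V) {v : V} (hv : v ≠ 0) (u : V) :
    ∃ X : Module.End K V, trace K V X = 0 ∧ X v = u := by
  obtain ⟨φ, hφ⟩ := Projective.exists_dual_eq_one K hv
  obtain ⟨θ, hθ, hθv⟩ :=
    exists_ne_zero_apply_eq_zero_of_one_lt (Dual.eval K V v) (by simp; omega)
  obtain ⟨w, hw⟩ := LinearMap.surjective hθ 1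
  refine ⟨φ.smulRight u - φ u • θ.smulRight w, ?_, ?_⟩
  · simp [hw]
  · simp_all

lemma exists_trace_eq_zero_comp_eq (hV : 2 ≤ finrank K V) {ψ : Dual K V} (hψ : ψ ≠ 0)
    (χ : Dual K V) : ∃ X : Module.End K V, trace K V X = 0 ∧ ψ ∘ₗ X = χ := by
  obtain ⟨v, hv⟩ := LinearMap.surjective hψ 1
  obtain ⟨z, hz, hψz⟩ := exists_ne_zero_apply_eq_zero_of_one_lt ψ hV
  obtain ⟨μ, hμ⟩ := Projective.exists_dual_eq_one K hz
  refine ⟨χ.smulRight v - χ v • μ.smulRight z, ?_, ?_⟩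
  · simp [hμ]
  · ext w
    simp [hv, hψz]

end LinearAlgebra

section Blocks

variable {K W : Type*} [Field K] [AddCommGroup W] [Module K W]

/-- The endomorphism of `W × K` with block matrix `[[0, u], [ψ, 0]]`. -/
def offDiag (u : W) (ψ : Dual K W) : Module.End K (W × K) :=
  (toSpanSingleton K W u ∘ₗ snd K W K).prod (ψ ∘ₗ fst K W K)

@[simp]
lemma offDiag_apply (u : W) (ψ : Dual K W) (x : W × K) : offDiag u ψ x = (x.2 • u, ψ x.1) :=
  rfl

lemma trace_offDiag [FiniteDimensional K W] (u : W) (ψ : Dual K W) :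
    trace K (W × K) (offDiag u ψ) = 0 := by
  have h : offDiag u ψ = (snd K W K).smulRight (u, 0) + (ψ ∘ₗ fst K W K).smulRight (0, 1) := by
    ext x <;> simp
  simp [h]

lemma offDiag_eq_add (u : W) (ψ : Dual K W) : offDiag u ψ = offDiag u 0 + offDiag 0 ψ := by
  ext x <;> simp

lemma eq_prodMap_add_offDiag (η : Module.End K (W × K)) :
    η = prodMap (fst K W K ∘ₗ η ∘ₗ inl K W K) ((η (0, 1)).2 • 1)
      + offDiag (η (0, 1)).1 (snd K W K ∘ₗ η ∘ₗ inl K W K) := by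
  ext w <;> simp [Prod.mk_zero_zero]

lemma lie_prodMap_prodMap_smul_one (X A : Module.End K W) (d : K) :
    ⁅prodMap X (0 : Module.End K K), prodMap A (d • (1 : Module.End K K))⁆ = prodMap ⁅X, A⁆ 0 := by
  ext w <;> simp [Ring.lie_def]

lemma lie_prodMap_offDiag (X : Module.End K W) (u : W) (ψ : Dual K W) :
    ⁅prodMap X (0 : Module.End K K), offDiag u ψ⁆ = offDiag (X u) (-(ψ ∘ₗ X)) := by
  ext x <;> simp [Ring.lie_def]

lemma lie_offDiag_offDiag (u : W) (ψ : Dual K W) :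
    ⁅offDiag u (0 : Dual K W), offDiag 0 ψ⁆ = prodMap (ψ.smulRight u) (-(ψ u) • 1) := by
  ext x <;> simp [Ring.lie_def, mul_comm]

end Blocks

section LieSubalgebra

variable {K W : Type*} [Field K] [AddCommGroup W] [Module K W]

def ContainsSl (L : LieSubalgebra K (Module.End K (W × K))) : Prop :=
  ∀ X : Module.End K W, trace K W X = 0 → prodMap X (0 : Module.End K K) ∈ L

variable {L : LieSubalgebra K (Module.End K (W × K))}

lemma offDiag_mem_of_mem (hL : ContainsSl L) {ξ : Module.End K (W × K)} (hξ : ξ ∈ L)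
    {X : Module.End K W} (hX : trace K W X = 0) :
    offDiag (X (ξ (0, 1)).1) (-((snd K W K ∘ₗ ξ ∘ₗ inl K W K) ∘ₗ X)) ∈ L := by
  set A := fst K W K ∘ₗ ξ ∘ₗ inl K W K
  have hbracket : ⁅prodMap X (0 : Module.End K K), ξ⁆
      = prodMap ⁅X, A⁆ 0 + offDiag (X (ξ (0, 1)).1) (-((snd K W K ∘ₗ ξ ∘ₗ inl K W K) ∘ₗ X)) := by
    conv_lhs => rw [eq_prodMap_add_offDiag ξ]
    rw [lie_add, lie_prodMap_prodMap_smul_one, lie_prodMap_offDiag]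
  have hA : prodMap ⁅X, A⁆ (0 : Module.End K K) ∈ L := hL _ (trace_lie X A)
  have h := sub_mem (L.lie_mem (hL X hX) hξ) hA
  rwa [hbracket, add_sub_cancel_left] at h

lemma offDiag_zero_right_mem [FiniteDimensional K W] (hL : ContainsSl L)
    (hW : 2 ≤ finrank K W) {v : W} (hv : v ≠ 0) (hvL : offDiag v 0 ∈ L) (u : W) :
    offDiag u 0 ∈ L := by
  obtain ⟨X, hX, hXv⟩ := exists_trace_eq_zero_apply_eq hW hv u
  simpa [lie_prodMap_offDiag, hXv] using L.lie_mem (hL X hX) hvL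

lemma offDiag_zero_left_mem [FiniteDimensional K W] (hL : ContainsSl L)
    (hW : 2 ≤ finrank K W) {ψ : Dual K W} (hψ : ψ ≠ 0) (hψL : offDiag 0 ψ ∈ L) (χ : Dual K W) :
    offDiag 0 χ ∈ L := by
  obtain ⟨X, hX, hXψ⟩ := exists_trace_eq_zero_comp_eq hW hψ (-χ)
  simpa [lie_prodMap_offDiag, hXψ] using L.lie_mem (hL X hX) hψL

lemma prodMap_smul_one_mem [FiniteDimensional K W] (hL : ContainsSl L)
    (hleft : ∀ u : W, offDiag u 0 ∈ L) (hright : ∀ ψ : Dual K W, offDiag 0 ψ ∈ L)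
    [Nontrivial W] {A : Module.End K W} {d : K} (hAd : trace K W A + d = 0) :
    prodMap A (d • (1 : Module.End K K)) ∈ L := by
  obtain ⟨u, hu⟩ := exists_ne (0 : W)
  obtain ⟨ψ, hψ⟩ := Projective.exists_dual_eq_one K hu
  have hT : prodMap (ψ.smulRight u) (-1 : Module.End K K) ∈ L := by
    convert L.lie_mem (hleft u) (hright ψ) using 1
    rw [lie_offDiag_offDiag, hψ]
    ext <;> simp
  have hsplit : prodMap A (d • (1 : Module.End K K))
      = prodMap (A + d • ψ.smulRight u) 0 - d • prodMap (ψ.smulRight u) (-1) := by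
    ext w <;> simp
  rw [hsplit]
  exact sub_mem (hL _ (by simpa [hψ] using hAd)) (L.smul_mem d hT)

lemma mem_of_offDiag_mem [FiniteDimensional K W] (hL : ContainsSl L)
    (hW : 2 ≤ finrank K W) {v : W} (hv : v ≠ 0) (hvL : offDiag v 0 ∈ L)
    {ψ : Dual K W} (hψ : ψ ≠ 0) (hψL : offDiag 0 ψ ∈ L)
    {η : Module.End K (W × K)} (hη : trace K (W × K) η = 0) : η ∈ L := by
  have : Nontrivial W := nontrivial_of_ne v 0 hv
  have hleft := offDiag_zero_right_mem hL hW hv hvL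
  have hright := offDiag_zero_left_mem hL hW hψ hψL
  rw [eq_prodMap_add_offDiag η] at hη ⊢
  have hdiag : trace K W (fst K W K ∘ₗ η ∘ₗ inl K W K) + (η (0, 1)).2 = 0 := by
    simpa [trace_prodMap', trace_offDiag] using hη
  have hoff : offDiag (η (0, 1)).1 (snd K W K ∘ₗ η ∘ₗ inl K W K) ∈ L := by
    rw [offDiag_eq_add]
    exact add_mem (hleft _) (hright _)
  exact add_mem (prodMap_smul_one_mem hL hleft hright hdiag) hoff

end LieSubalgebra

theorem stmt_11_general {W : Type*} [AddCommGroup W] [Module ℂ W] [FiniteDimensional ℂ W]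
    (hk : 3 ≤ Module.finrank ℂ W)
    (𝔩 : LieSubalgebra ℂ (Module.End ℂ (W × ℂ)))
    (hslW : ∀ ξ₀ : Module.End ℂ W, LinearMap.trace ℂ W ξ₀ = 0 →
      LinearMap.prodMap ξ₀ (0 : Module.End ℂ ℂ) ∈ 𝔩)
    (ξ : Module.End ℂ (W × ℂ)) (hξ : ξ ∈ 𝔩)
    (hWE : ∃ w : W, (ξ (w, 0)).2 ≠ 0)
    (hEW : (ξ (0, 1)).1 ≠ 0) :
    ∀ η : Module.End ℂ (W × ℂ), LinearMap.trace ℂ (W × ℂ) η = 0 → η ∈ 𝔩 := by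
  intro η hη
  have hoffDiag := fun X (hX : trace ℂ W X = 0) ↦ offDiag_mem_of_mem hslW hξ hX
  set b := (ξ (0, 1)).1
  set c := snd ℂ W ℂ ∘ₗ ξ ∘ₗ inl ℂ W ℂ
  have hc : c ≠ 0 := fun h ↦ by
    obtain ⟨w, hw⟩ := hWE
    exact hw (LinearMap.congr_fun h w)
  -- `X = φ.smulRight v` with `φ b = 1` and `φ v = c v = 0` kills the `W → E` block.
  obtain ⟨φ, hφb⟩ := Projective.exists_dual_eq_one ℂ hEW
  obtain ⟨v, hv, hcv, hφv⟩ := exists_ne_zero_apply_eq_zero_apply_eq_zero_of_two_lt c φ (by omega)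
  have hvL := hoffDiag (φ.smulRight v) (by rwa [trace_smulRight])
  rw [smulRight_apply, hφb, one_smul, comp_smulRight, hcv, zero_smul, neg_zero] at hvL
  -- `X = θ.smulRight w` with `c w = 1` and `θ b = θ w = 0` kills the `E → W` block.
  obtain ⟨w, hcw⟩ := LinearMap.surjective hc 1
  obtain ⟨θ, hθ, hθb, hθw⟩ := exists_ne_zero_apply_eq_zero_apply_eq_zero_of_two_lt
    (Dual.eval ℂ W b) (Dual.eval ℂ W w) (by simp; omega)
  rw [Dual.eval_apply] at hθb hθw
  have hθL := hoffDiag (θ.smulRight w) (by rwa [trace_smulRight])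
  rw [smulRight_apply, hθb, zero_smul, comp_smulRight, hcw, one_smul] at hθL
  exact mem_of_offDiag_mem hslW (by omega) hv hvL (neg_ne_zero.mpr hθ) hθL hη

/-- Lemma 5.2 (key step): let `V̄ = W ⊕ E` with `dim W = k ≥ 3` and `E = ℂ`
one-dimensional.  If a Lie subalgebra `𝔩` of `sl(V̄)` (trace-zero endomorphisms of
`W × ℂ`) contains `sl(W)` (acting trivially on the `ℂ`-factor) and contains an element
`ξ` whose off-diagonal blocks `W → E` and `E → W` are both nonzero, then `𝔩` is all of
`sl(V̄)`. -/
theorem stmt_11 {W : Type*} [AddCommGroup W] [Module ℂ W] [FiniteDimensional ℂ W]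
    (hk : 3 ≤ Module.finrank ℂ W)
    (𝔩 : LieSubalgebra ℂ (Module.End ℂ (W × ℂ)))
    (h𝔩sl : ∀ η ∈ 𝔩, LinearMap.trace ℂ (W × ℂ) η = 0)
    (hslW : ∀ ξ₀ : Module.End ℂ W, LinearMap.trace ℂ W ξ₀ = 0 →
      LinearMap.prodMap ξ₀ (0 : Module.End ℂ ℂ) ∈ 𝔩)
    (ξ : Module.End ℂ (W × ℂ)) (hξ : ξ ∈ 𝔩)
    (hWE : ∃ w : W, (ξ (w, 0)).2 ≠ 0)
    (hEW : (ξ (0, 1)).1 ≠ 0) :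
    ∀ η : Module.End ℂ (W × ℂ), LinearMap.trace ℂ (W × ℂ) η = 0 → η ∈ 𝔩 :=
  stmt_11_general hk 𝔩 hslW ξ hξ hWE hEW
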